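/- Helstrom bound: for two density matrices ψ₁, ψ₂ on ℂᵈ and prior probabilities q₁, q₂ ≥ 0 with q₁ + q₂ = 1, the maximum over POVMs {M₁, M₂} (M₁, M₂ ⪰ 0, M₁ + M₂ = I) of q₁ Tr[M₁ψ₁] + q₂ Tr[M₂ψ₂] equals 1/2 + (1/2)‖q₁ψ₁ − q₂ψ₂‖₁, where ‖·‖₁ is the trace norm. -/

import Mathlib

open Matrix Complex ComplexOrder

noncomputable section

/-- The trace norm ‖X‖₁ = Tr √(XᴴX). -/
def traceNorm {d : ℕ} (X : Matrix (Fin d) (Fin d) ℂ) : ℝ :=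
  ∑ i, Real.sqrt ((Matrix.isHermitian_conjTranspose_mul_self X).eigenvalues i)


section aux
open Polynomial


variable {n : Type*} [Fintype n] [DecidableEq n]

lemma charpoly_conj_aux (U V A : Matrix n n ℂ) (hUV : U * V = 1) (hVU : V * U = 1) :
    (U * A * V).charpoly = A.charpoly := by
  have hmap : ∀ X Y : Matrix n n ℂ, (X * Y).map (C : ℂ →+* ℂ[X]) = X.map C * Y.map C := by
    intro X Y; exact (Matrix.map_mul (f := (C : ℂ →+* ℂ[X])) ..)
  have hcomm : (Matrix.scalar n (X : ℂ[X])) * U.map C = U.map C * (Matrix.scalar n (X : ℂ[X])) :=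
    (Matrix.scalar_commute (X : ℂ[X]) (fun r => Commute.all _ _) (U.map C))
  have hc : charmatrix (U * A * V) = U.map C * charmatrix A * V.map C := by
    unfold charmatrix
    rw [mul_sub, sub_mul]
    congr 1
    · rw [← hcomm, mul_assoc, ← hmap, hUV]
      simp
    · simp only [RingHom.mapMatrix_apply]
      rw [← hmap, ← hmap]
  have hdet : det (U.map (C : ℂ →+* ℂ[X])) * det (V.map (C : ℂ →+* ℂ[X])) = 1 := by
    rw [← det_mul, ← hmap, hUV]; simp
  rw [Matrix.charpoly, Matrix.charpoly, hc, det_mul, det_mul]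
  calc (U.map (C : ℂ →+* ℂ[X])).det * (charmatrix A).det * (V.map (C : ℂ →+* ℂ[X])).det
      = (charmatrix A).det * ((U.map (C : ℂ →+* ℂ[X])).det * (V.map (C : ℂ →+* ℂ[X])).det) := by
        ring
    _ = (charmatrix A).det := by rw [hdet, mul_one]

lemma charpoly_diagonal (f : n → ℂ) :
    (Matrix.diagonal f).charpoly = ∏ i, (X - C (f i)) := by
  rw [Matrix.charpoly]
  have : charmatrix (Matrix.diagonal f) = Matrix.diagonal (fun i => X - C (f i)) := by
    ext i j
    by_cases h : i = j
    · subst h; simp [charmatrix_apply_eq]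
    · rw [charmatrix_apply_ne _ _ _ h, Matrix.diagonal_apply_ne _ h, Matrix.diagonal_apply_ne _ h]
      simp
  rw [this, det_diagonal]

lemma charpoly_isHermitian {A : Matrix n n ℂ} (hA : A.IsHermitian) :
    A.charpoly = ∏ i, (X - C (hA.eigenvalues i : ℂ)) := by
  have hU1 : (hA.eigenvectorUnitary : Matrix n n ℂ) * star (hA.eigenvectorUnitary : Matrix n n ℂ) = 1 :=
    (Matrix.mem_unitaryGroup_iff).mp (hA.eigenvectorUnitary).2
  have hU2 : star (hA.eigenvectorUnitary : Matrix n n ℂ) * (hA.eigenvectorUnitary : Matrix n n ℂ) = 1 :=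
    (Matrix.mem_unitaryGroup_iff').mp (hA.eigenvectorUnitary).2
  conv_lhs => rw [hA.spectral_theorem]
  rw [Unitary.conjStarAlgAut_apply]
  rw [charpoly_conj_aux _ _ _ hU1 hU2, _root_.charpoly_diagonal]
  rfl

lemma eigenvalues_multiset_eq {A : Matrix n n ℂ} (hA : A.IsHermitian) (f : n → ℝ)
    (hf : A.charpoly = ∏ i, (X - C (f i : ℂ))) :
    (Finset.univ.val.map fun i => (hA.eigenvalues i : ℂ)) =
    (Finset.univ.val.map fun i => (f i : ℂ)) := by
  have h1 := charpoly_isHermitian hA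
  have key : (∏ i, (X - C (hA.eigenvalues i : ℂ))) = ∏ i, (X - C (f i : ℂ)) := h1 ▸ hf
  have r1 := Polynomial.roots_multiset_prod_X_sub_C
    (Finset.univ.val.map fun i => (hA.eigenvalues i : ℂ))
  have r2 := Polynomial.roots_multiset_prod_X_sub_C
    (Finset.univ.val.map fun i => (f i : ℂ))
  rw [Multiset.map_map] at r1 r2
  rw [← r1, ← r2]
  have hp : (Multiset.map ((fun a => X - C a) ∘ fun i => (hA.eigenvalues i : ℂ)) Finset.univ.val).prod
      = (Multiset.map ((fun a => X - C a) ∘ fun i => (f i : ℂ)) Finset.univ.val).prod := by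
    rw [← Finset.prod_eq_multiset_prod, ← Finset.prod_eq_multiset_prod]
    exact key
  rw [hp]


lemma traceNorm_eq_sum_abs {d : ℕ} {Δ : Matrix (Fin d) (Fin d) ℂ} (hΔ : Δ.IsHermitian) :
    traceNorm Δ = ∑ i, |hΔ.eigenvalues i| := by
  set U : Matrix (Fin d) (Fin d) ℂ := (hΔ.eigenvectorUnitary : Matrix (Fin d) (Fin d) ℂ) with hUdef
  have hU1 : U * star U = 1 := (Matrix.mem_unitaryGroup_iff).mp (hΔ.eigenvectorUnitary).2
  have hU2 : star U * U = 1 := (Matrix.mem_unitaryGroup_iff').mp (hΔ.eigenvectorUnitary).2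
  set D : Matrix (Fin d) (Fin d) ℂ :=
    Matrix.diagonal (RCLike.ofReal ∘ hΔ.eigenvalues) with hDdef
  have hB : Δᴴ * Δ = U * Matrix.diagonal (fun i => ((hΔ.eigenvalues i ^ 2 : ℝ) : ℂ)) * star U := by
    have hDD : Matrix.diagonal (fun i => ((hΔ.eigenvalues i ^ 2 : ℝ) : ℂ)) = D * D := by
      rw [hDdef, Matrix.diagonal_mul_diagonal]
      congr 1
      funext i
      norm_cast
      simp [sq]
    have key : (U * D * star U) * (U * D * star U) = U * (D * D) * star U := by
      simp only [Matrix.mul_assoc]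
      rw [← Matrix.mul_assoc (star U) U (D * star U), hU2, Matrix.one_mul]
    rw [hDD, ← key, ← (show Δ = U * D * star U from hΔ.spectral_theorem), hΔ.eq]
  have hch : (Δᴴ * Δ).charpoly = ∏ i, (X - C ((hΔ.eigenvalues i ^ 2 : ℝ) : ℂ)) := by
    rw [hB, charpoly_conj_aux _ _ _ hU1 hU2, _root_.charpoly_diagonal]
  have hms := eigenvalues_multiset_eq (Matrix.isHermitian_conjTranspose_mul_self Δ)
    (fun i => hΔ.eigenvalues i ^ 2) hch
  have hsum := congrArg (fun s : Multiset ℂ => (s.map (fun z => Real.sqrt z.re)).sum) hms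
  simp only [Multiset.map_map] at hsum
  unfold traceNorm
  rw [Finset.sum_eq_multiset_sum, Finset.sum_eq_multiset_sum]
  simp only [Function.comp_def, Complex.ofReal_re, Real.sqrt_sq_eq_abs] at hsum
  exact hsum

lemma trace_eq_sum_eigenvalues {A : Matrix n n ℂ} (hA : A.IsHermitian) :
    A.trace = ∑ i, (hA.eigenvalues i : ℂ) := by
  conv_lhs => rw [hA.spectral_theorem]
  rw [Unitary.conjStarAlgAut_apply]
  rw [Matrix.trace_mul_cycle]
  have hU2 : star (hA.eigenvectorUnitary : Matrix n n ℂ) * (hA.eigenvectorUnitary : Matrix n n ℂ) = 1 :=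
    (Matrix.mem_unitaryGroup_iff').mp (hA.eigenvectorUnitary).2
  rw [hU2, Matrix.one_mul, Matrix.trace_diagonal]
  rfl

lemma posSemidef_diag_re_nonneg {A : Matrix n n ℂ} (hA : A.PosSemidef) (i : n) :
    0 ≤ A i i := by
  exact hA.diag_nonneg

lemma value_eq {d : ℕ} (ψ1 ψ2 M1 M2 : Matrix (Fin d) (Fin d) ℂ) (t2 : ψ2.trace = 1)
    (hsum : M1 + M2 = 1) (q1 q2 : ℝ) :
    (q1 : ℂ) * (M1 * ψ1).trace + (q2 : ℂ) * (M2 * ψ2).trace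
      = (q2 : ℂ) + (M1 * ((q1 : ℂ) • ψ1 - (q2 : ℂ) • ψ2)).trace := by
  have hM2 : M2 = 1 - M1 := by rw [← hsum]; abel
  subst hM2
  rw [Matrix.mul_sub, Matrix.mul_smul, Matrix.mul_smul, Matrix.trace_sub, Matrix.trace_smul,
    Matrix.trace_smul, Matrix.sub_mul, Matrix.one_mul, Matrix.trace_sub, t2]
  simp only [smul_eq_mul]
  ring

theorem stmt9 {d : ℕ} (ψ1 ψ2 : Matrix (Fin d) (Fin d) ℂ)
    (h1 : ψ1.PosSemidef) (t1 : ψ1.trace = 1) (h2 : ψ2.PosSemidef) (t2 : ψ2.trace = 1)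
    (q1 q2 : ℝ) (hq1 : 0 ≤ q1) (hq2 : 0 ≤ q2) (hq : q1 + q2 = 1) :
    IsGreatest
      {v : ℝ | ∃ M1 M2 : Matrix (Fin d) (Fin d) ℂ,
        M1.PosSemidef ∧ M2.PosSemidef ∧ M1 + M2 = 1 ∧
        v = ((q1 : ℂ) * (M1 * ψ1).trace + (q2 : ℂ) * (M2 * ψ2).trace).re}
      (1 / 2 + 1 / 2 * traceNorm ((q1 : ℂ) • ψ1 - (q2 : ℂ) • ψ2)) := by
  set Δ : Matrix (Fin d) (Fin d) ℂ := (q1 : ℂ) • ψ1 - (q2 : ℂ) • ψ2 with hΔdef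
  have hΔ : Δ.IsHermitian := by
    show Δᴴ = Δ
    rw [hΔdef]
    simp [Matrix.conjTranspose_sub, Matrix.conjTranspose_smul, h1.1.eq, h2.1.eq,
      Complex.star_def, Complex.conj_ofReal]
  set lam : Fin d → ℝ := hΔ.eigenvalues with hlam
  set U : Matrix (Fin d) (Fin d) ℂ := (hΔ.eigenvectorUnitary : Matrix (Fin d) (Fin d) ℂ) with hUd
  have hU1 : U * star U = 1 := (Matrix.mem_unitaryGroup_iff).mp (hΔ.eigenvectorUnitary).2
  have hU2 : star U * U = 1 := (Matrix.mem_unitaryGroup_iff').mp (hΔ.eigenvectorUnitary).2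
  have hspec : Δ = U * Matrix.diagonal (RCLike.ofReal ∘ lam) * star U := hΔ.spectral_theorem
  have htraceΔ : Δ.trace = ((q1 - q2 : ℝ) : ℂ) := by
    rw [hΔdef, Matrix.trace_sub, Matrix.trace_smul, Matrix.trace_smul, t1, t2]
    push_cast
    simp
  have hsumlam : ∑ i, lam i = q1 - q2 := by
    have h := trace_eq_sum_eigenvalues hΔ
    rw [htraceΔ] at h
    exact_mod_cast h.symm
  have hT : traceNorm Δ = ∑ i, |lam i| := traceNorm_eq_sum_abs hΔ
  have hmax : ∀ x : ℝ, max x 0 = (x + |x|) / 2 := by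
    intro x
    rcases le_or_gt 0 x with h | h
    · rw [max_eq_left h, _root_.abs_of_nonneg h]; ring
    · rw [max_eq_right h.le, abs_of_neg h]; ring
  have hbound : 1 / 2 + 1 / 2 * traceNorm Δ = q2 + ∑ i, max (lam i) 0 := by
    rw [hT]
    have e : ∑ i, max (lam i) 0 = (∑ i, (lam i + |lam i|)) / 2 := by
      simp_rw [hmax]
      rw [Finset.sum_div]
    rw [e, Finset.sum_add_distrib, hsumlam]
    linarith
  -- trace of (M * Δ) in the eigenbasis
  have htrM : ∀ M : Matrix (Fin d) (Fin d) ℂ,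
      (M * Δ).trace = ∑ i, (star U * M * U) i i * (lam i : ℂ) := by
    intro M
    calc (M * Δ).trace
        = (M * (U * Matrix.diagonal (RCLike.ofReal ∘ lam) * star U)).trace := by rw [← hspec]
      _ = ((star U * M * U) * Matrix.diagonal (RCLike.ofReal ∘ lam)).trace := by
          rw [← Matrix.mul_assoc, ← Matrix.mul_assoc, Matrix.trace_mul_comm,
            ← Matrix.mul_assoc, ← Matrix.mul_assoc]
      _ = ∑ i, (star U * M * U) i i * (lam i : ℂ) := by
          simp [Matrix.trace, Matrix.diag, Matrix.mul_diagonal, Function.comp]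
  constructor
  · -- membership : the optimal POVM
    set Dp : Matrix (Fin d) (Fin d) ℂ :=
      Matrix.diagonal (fun i => if 0 ≤ lam i then (1 : ℂ) else 0) with hDp
    set Dq : Matrix (Fin d) (Fin d) ℂ :=
      Matrix.diagonal (fun i => if 0 ≤ lam i then (0 : ℂ) else 1) with hDq
    have hDpq : U * Dp * star U + U * Dq * star U = 1 := by
      have hsum1 : Dp + Dq = 1 := by
        rw [hDp, hDq, Matrix.diagonal_add, ← Matrix.diagonal_one]
        have hfun : (fun i => (if 0 ≤ lam i then (1 : ℂ) else 0)
            + if 0 ≤ lam i then (0 : ℂ) else 1) = fun _ => 1 := by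
          funext i
          by_cases h : 0 ≤ lam i <;> simp [h]
        rw [hfun]
      rw [← Matrix.add_mul, ← Matrix.mul_add, hsum1, Matrix.mul_one, hU1]
    refine ⟨U * Dp * star U, U * Dq * star U, ?_, ?_, hDpq, ?_⟩
    · rw [show star U = Uᴴ from rfl]
      refine (Matrix.PosSemidef.diagonal ?_).mul_mul_conjTranspose_same U
      intro i
      dsimp only
      split <;> simp
    · rw [show star U = Uᴴ from rfl]
      refine (Matrix.PosSemidef.diagonal ?_).mul_mul_conjTranspose_same U
      intro i
      dsimp only
      split <;> simp
    · rw [value_eq ψ1 ψ2 _ _ t2 hDpq q1 q2, htrM, hbound]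
      have hdiag : ∀ i, (star U * (U * Dp * star U) * U) i i
          = if 0 ≤ lam i then (1 : ℂ) else 0 := by
        intro i
        have hc : star U * (U * Dp * star U) * U = Dp := by
          calc star U * (U * Dp * star U) * U
              = (star U * U) * (Dp * (star U * U)) := by simp only [Matrix.mul_assoc]
            _ = Dp := by rw [hU2]; simp
        rw [hc, hDp, Matrix.diagonal_apply_eq]
      rw [Complex.add_re, Complex.re_sum, Complex.ofReal_re]
      congr 1
      refine Finset.sum_congr rfl fun i _ => ?_
      rw [hdiag i]
      split_ifs with h
      · simp [max_eq_left h]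
      · push_neg at h
        simp [max_eq_right h.le]
  · -- upper bound
    rintro v ⟨M1, M2, p1, p2, hsumM, hv⟩
    rw [value_eq ψ1 ψ2 M1 M2 t2 hsumM q1 q2, htrM] at hv
    set N : Matrix (Fin d) (Fin d) ℂ := star U * M1 * U with hN
    have hNpsd : N.PosSemidef := by
      rw [hN, show star U = Uᴴ from rfl]
      exact p1.conjTranspose_mul_mul_same U
    have hN'psd : (star U * M2 * U).PosSemidef := by
      rw [show star U = Uᴴ from rfl]
      exact p2.conjTranspose_mul_mul_same U
    have hNsum : N + star U * M2 * U = 1 := by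
      rw [hN, ← Matrix.add_mul, ← Matrix.mul_add, hsumM, Matrix.mul_one, hU2]
    have hci0 : ∀ i, 0 ≤ (N i i).re :=
      fun i => (Complex.nonneg_iff.mp (posSemidef_diag_re_nonneg hNpsd i)).1
    have hci1 : ∀ i, (N i i).re ≤ 1 := by
      intro i
      have h0 := (Complex.nonneg_iff.mp (posSemidef_diag_re_nonneg hN'psd i)).1
      have hadd : N i i + (star U * M2 * U) i i = 1 := by
        have := congrFun (congrFun (congrArg (fun M => (M : Matrix (Fin d) (Fin d) ℂ)) hNsum) i) i
        simpa [Matrix.one_apply_eq] using this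
      have := congrArg Complex.re hadd
      simp [Complex.add_re] at this
      linarith
    have hvre : v = q2 + ∑ i, (N i i).re * lam i := by
      rw [hv, Complex.add_re, Complex.re_sum, Complex.ofReal_re]
      congr 1
      refine Finset.sum_congr rfl fun i _ => ?_
      simp [Complex.mul_re]
    rw [hvre, hbound]
    have : ∑ i, (N i i).re * lam i ≤ ∑ i, max (lam i) 0 := by
      refine Finset.sum_le_sum fun i _ => ?_
      rcases le_or_gt 0 (lam i) with h | h
      · rw [max_eq_left h]
        nlinarith [hci0 i, hci1 i]
      · rw [max_eq_right h.le]
        nlinarith [hci0 i, hci1 i]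
    linarith
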